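/- For all real numbers τ₁, τ₂, τ₃, the 5×5 complex matrix ρ_τ is skew-Hermitian (ρ_τ + conj(ρ_τ)ᵀ = 0), has trace zero, and satisfies ρ_τᵀ·K + K·ρ_τ = 0, where K is the matrix of the invariant quadratic form. In particular ρ_τ lies in the Lie algebra su(5) and infinitesimally preserves the quadratic form K(z,z) = z^A K_{AB} z^B. -/
import Mathlib


open Complex Matrix BigOperators Finset

noncomputable section

/-- The primitive cube root of unity `q = exp(2πi/3)`. -/
def q : ℂ := Complex.exp (2 * Real.pi * Complex.I / 3)

/-- A rank-3 tensor in 3-dimensional space. -/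
abbrev Tensor3 := Fin 3 → Fin 3 → Fin 3 → ℂ

/-- Condition T1: every trace of the tensor vanishes. -/
def CondT1 (T : Tensor3) : Prop :=
  ∀ j : Fin 3, (∑ i, T i i j = 0) ∧ (∑ i, T i j i = 0) ∧ (∑ i, T j i i = 0)

/-- Condition T2: all cyclic sums vanish. -/
def CondT2 (T : Tensor3) : Prop :=
  ∀ i j k : Fin 3, T i j k + T j k i + T k i j = 0

/-- The cyclic permutation operator `Φ_σ` on rank-3 tensors. -/
def Phi (T : Tensor3) : Tensor3 := fun i j k => T j k i

/-- Action of a real 3×3 matrix on a rank-3 tensor. -/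
def gact (g : Matrix (Fin 3) (Fin 3) ℝ) (T : Tensor3) : Tensor3 :=
  fun i j k => ∑ p, ∑ r, ∑ s, (g i p : ℂ) * (g j r : ℂ) * (g k s : ℂ) * T p r s

/-- The tensor `T(z)` associated with a point `z ∈ ℂ⁵`. -/
def Tz (z : Fin 5 → ℂ) : Tensor3 :=
  ![![![0, -(star q) * z 1 / (Real.sqrt 6 : ℂ), (star q) * z 2 / (Real.sqrt 6 : ℂ)],
     ![-q * z 1 / (Real.sqrt 6 : ℂ), z 0 / (Real.sqrt 6 : ℂ), z 3 / (Real.sqrt 3 : ℂ)],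
     ![q * z 2 / (Real.sqrt 6 : ℂ), q * z 4 / (Real.sqrt 3 : ℂ), -(z 0) / (Real.sqrt 6 : ℂ)]],
    ![![-(z 1) / (Real.sqrt 6 : ℂ), q * z 0 / (Real.sqrt 6 : ℂ), (star q) * z 4 / (Real.sqrt 3 : ℂ)],
     ![(star q) * z 0 / (Real.sqrt 6 : ℂ), 0, -(star q) * z 2 / (Real.sqrt 6 : ℂ)],
     ![(star q) * z 3 / (Real.sqrt 3 : ℂ), -q * z 2 / (Real.sqrt 6 : ℂ), z 1 / (Real.sqrt 6 : ℂ)]],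
    ![![z 2 / (Real.sqrt 6 : ℂ), q * z 3 / (Real.sqrt 3 : ℂ), -q * z 0 / (Real.sqrt 6 : ℂ)],
     ![z 4 / (Real.sqrt 3 : ℂ), -(z 2) / (Real.sqrt 6 : ℂ), q * z 1 / (Real.sqrt 6 : ℂ)],
     ![-(star q) * z 0 / (Real.sqrt 6 : ℂ), (star q) * z 1 / (Real.sqrt 6 : ℂ), 0]]]

/-- The matrix `K` of the invariant quadratic form
`K(z,z) = (z¹)² + (z²)² + (z³)² + 2q z⁴ z⁵`. -/
def Kmat : Matrix (Fin 5) (Fin 5) ℂ :=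
  !![1, 0, 0, 0, 0;
     0, 1, 0, 0, 0;
     0, 0, 1, 0, 0;
     0, 0, 0, 0, q;
     0, 0, 0, q, 0]

/-- The matrix `ρ_τ` of the infinitesimal action of `so(3)` on `ℂ⁵`. -/
def rho (τ₁ τ₂ τ₃ : ℝ) : Matrix (Fin 5) (Fin 5) ℂ :=
  !![0, (τ₃ : ℂ), -(τ₂ : ℂ), -(Real.sqrt 2 : ℂ) * τ₁, -(Real.sqrt 2 : ℂ) * q * τ₁;
     -(τ₃ : ℂ), 0, (τ₁ : ℂ), -(Real.sqrt 2 : ℂ) * (star q) * τ₂, -(Real.sqrt 2 : ℂ) * (star q) * τ₂;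
     (τ₂ : ℂ), -(τ₁ : ℂ), 0, -(Real.sqrt 2 : ℂ) * q * τ₃, -(Real.sqrt 2 : ℂ) * τ₃;
     (Real.sqrt 2 : ℂ) * τ₁, (Real.sqrt 2 : ℂ) * q * τ₂, (Real.sqrt 2 : ℂ) * (star q) * τ₃, 0, 0;
     (Real.sqrt 2 : ℂ) * (star q) * τ₁, (Real.sqrt 2 : ℂ) * q * τ₂, (Real.sqrt 2 : ℂ) * τ₃, 0, 0]

lemma q_eq : q = (-1 + (Real.sqrt 3 : ℂ) * Complex.I) / 2 := by
  have h : (2 * Real.pi * Complex.I / 3 : ℂ) = ((2 * Real.pi / 3 : ℝ) : ℂ) * Complex.I := by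
    push_cast; ring
  rw [q, h, Complex.exp_mul_I, ← Complex.ofReal_cos, ← Complex.ofReal_sin]
  have h23 : (2 * Real.pi / 3 : ℝ) = Real.pi - Real.pi / 3 := by ring
  rw [h23, Real.cos_pi_sub, Real.sin_pi_sub, Real.cos_pi_div_three, Real.sin_pi_div_three]
  push_cast
  ring

lemma sqrt3_sq : ((Real.sqrt 3 : ℝ) : ℂ) ^ 2 = 3 := by
  rw [← Complex.ofReal_pow, Real.sq_sqrt (by norm_num : (3:ℝ) ≥ 0)]
  norm_num

lemma q_quad : q ^ 2 + q + 1 = 0 := by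
  rw [q_eq]
  have h3 := sqrt3_sq
  have hI : Complex.I ^ 2 = -1 := Complex.I_sq
  linear_combination (-(1:ℂ)/4) * h3 + ((Real.sqrt 3 : ℂ)^2 / 4 - 3/4) * hI + (3/4) * hI

lemma star_q : star q = -1 - q := by
  rw [q_eq]
  have h : star ((-1 + (Real.sqrt 3 : ℂ) * Complex.I) / 2)
      = (-1 - (Real.sqrt 3 : ℂ) * Complex.I) / 2 := by
    simp [Complex.star_def, map_div₀, Complex.conj_ofReal]
    ring
  rw [h]
  ring

set_option maxHeartbeats 1000000 in
/-- `ρ_τ` is skew-Hermitian, traceless, and infinitesimally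
preserves the quadratic form `K`; hence `ρ_τ ∈ su(5)`. -/
theorem rho_skewHermitian_traceless_preserves_K (τ₁ τ₂ τ₃ : ℝ) :
    rho τ₁ τ₂ τ₃ + (rho τ₁ τ₂ τ₃)ᴴ = 0 ∧
    Matrix.trace (rho τ₁ τ₂ τ₃) = 0 ∧
    (rho τ₁ τ₂ τ₃)ᵀ * Kmat + Kmat * rho τ₁ τ₂ τ₃ = 0 := by
  have hsq := star_q
  have hq2 := q_quad
  refine ⟨?_, ?_, ?_⟩
  · ext i j
    fin_cases i <;> fin_cases j <;>
      simp [rho, Matrix.conjTranspose_apply, Matrix.add_apply, star_mul', star_neg,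
        Complex.conj_ofReal, hsq, Matrix.cons_val', Matrix.cons_val_zero, Matrix.cons_val_one,
        Matrix.head_cons, Matrix.head_fin_const, Matrix.empty_val', Matrix.cons_val_fin_one,
        Matrix.cons_val_succ, Matrix.vecHead, Matrix.vecTail] <;>
      ring
  · simp [Matrix.trace, rho, Fin.sum_univ_five, Matrix.diag, Matrix.cons_val_zero,
      Matrix.cons_val_one, Matrix.cons_val_two, Matrix.cons_val_three, Matrix.cons_val_four,
      Matrix.head_cons, Matrix.vecHead, Matrix.vecTail, Function.comp]
  · ext i j
    fin_cases i <;> fin_cases j <;>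
      simp [rho, Kmat, Matrix.mul_apply, Matrix.add_apply, Matrix.transpose_apply,
        Matrix.zero_apply, Fin.sum_univ_five, hsq, Matrix.cons_val', Matrix.cons_val_zero,
        Matrix.cons_val_one, Matrix.cons_val_two, Matrix.cons_val_three, Matrix.cons_val_four,
        Matrix.head_cons, Matrix.head_fin_const, Matrix.empty_val', Matrix.cons_val_fin_one,
        Matrix.vecHead, Matrix.vecTail, Matrix.of_apply, Matrix.cons_val_succ, Function.comp] <;>
      first
        | ring1
        | linear_combination ((Real.sqrt 2 : ℂ) * τ₂) * hq2
        | linear_combination (-(Real.sqrt 2 : ℂ) * τ₁) * hq2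
        | linear_combination (-(Real.sqrt 2 : ℂ) * τ₃) * hq2
        | linear_combination ((Real.sqrt 2 : ℂ) * τ₁) * hq2
        | linear_combination ((Real.sqrt 2 : ℂ) * τ₃) * hq2
        | linear_combination (-(Real.sqrt 2 : ℂ) * τ₂) * hq2

end
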